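/- arXiv:2101.01776 — 7 statements merged into one kernel-verified Lean document; each statement's English description precedes it below -/
import Mathlib

section
/- Let L be a real n×n matrix with ⟨Lx, x⟩ ≤ 0 for all x, and let γ ≥ η > 0. Then ‖I - (γ - η)(γI - L)⁻¹‖ ≤ 1 in the operator 2-norm. -/
open Matrix

/-- The continuous linear map on Euclidean space induced by a real matrix;
`‖toE A‖` is the operator 2-norm of `A`, and `inner` gives the Euclidean
inner product. -/
noncomputable def toE {n : ℕ} (A : Matrix (Fin n) (Fin n) ℝ) :
    EuclideanSpace ℝ (Fin n) →L[ℝ] EuclideanSpace ℝ (Fin n) :=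
  Matrix.toEuclideanCLM (𝕜 := ℝ) A

theorem stmt_1 {n : ℕ} (L : Matrix (Fin n) (Fin n) ℝ)
    (hL : ∀ x : EuclideanSpace ℝ (Fin n), inner ℝ (toE L x) x ≤ (0 : ℝ))
    (η γ : ℝ) (hη : 0 < η) (hγ : η ≤ γ) :
    ‖toE ((1 : Matrix (Fin n) (Fin n) ℝ) - (γ - η) • (γ • (1 : Matrix (Fin n) (Fin n) ℝ) - L)⁻¹)‖ ≤ 1 := by
  set M : Matrix (Fin n) (Fin n) ℝ := γ • (1 : Matrix (Fin n) (Fin n) ℝ) - L with hMdef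
  have hME : ∀ x, toE M x = γ • x - toE L x := by
    intro x
    simp [toE, hMdef, map_sub, _root_.map_smul]
  have hinj : Function.Injective (toE M) := by
    rw [injective_iff_map_eq_zero]
    intro x hx
    rw [hME x, sub_eq_zero] at hx
    have h1 : γ * ‖x‖ ^ 2 = inner ℝ (toE L x) x := by
      rw [← hx, real_inner_smul_left, real_inner_self_eq_norm_sq]
    by_contra hx0
    have hxp : 0 < ‖x‖ ^ 2 := by
      have : 0 < ‖x‖ := norm_pos_iff.mpr hx0
      positivity
    nlinarith [hL x, hη.trans_le hγ]
  have hsurj : Function.Surjective (toE M) :=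
    LinearMap.injective_iff_surjective.mp hinj
  have hmvinj : Function.Injective (M.mulVec) := by
    intro v w hvw
    have h1 : toE M ((WithLp.equiv 2 _).symm v) = toE M ((WithLp.equiv 2 _).symm w) := by
      simp only [toE, WithLp.equiv_symm_apply, Matrix.toEuclideanCLM_toLp, Matrix.toLin'_apply, hvw]
    exact (WithLp.equiv 2 _).symm.injective (hinj h1)
  have hMu : IsUnit M := Matrix.mulVec_injective_iff_isUnit.mp hmvinj
  have hMinv : M⁻¹ * M = 1 := Matrix.nonsing_inv_mul M ((Matrix.isUnit_iff_isUnit_det M).mp hMu)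
  apply ContinuousLinearMap.opNorm_le_bound _ zero_le_one
  intro y
  obtain ⟨x, rfl⟩ := hsurj y
  have hTy : toE (1 - (γ - η) • M⁻¹) (toE M x) = η • x - toE L x := by
    have e1 : toE (1 - (γ - η) • M⁻¹) (toE M x) = toE ((1 - (γ - η) • M⁻¹) * M) x := by
      simp [toE, _root_.map_mul]
    rw [e1]
    have hexp : (1 - (γ - η) • M⁻¹) * M = M - (γ - η) • 1 := by
      rw [sub_mul, one_mul, Matrix.smul_mul, hMinv]
    rw [hexp]
    have e2 : toE (M - (γ - η) • 1) x = toE M x - (γ - η) • x := by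
      simp [toE, map_sub, _root_.map_smul]
    rw [e2, hME x]
    module
  rw [hTy, hME x, one_mul]
  have key : ‖η • x - toE L x‖ ^ 2 ≤ ‖γ • x - toE L x‖ ^ 2 := by
    rw [norm_sub_sq_real, norm_sub_sq_real]
    have h1 : inner ℝ (η • x) (toE L x) = η * inner ℝ x (toE L x) := real_inner_smul_left x (toE L x) η
    have h2 : inner ℝ (γ • x) (toE L x) = γ * inner ℝ x (toE L x) := real_inner_smul_left x (toE L x) γ
    have h3 : (inner ℝ x (toE L x) : ℝ) ≤ 0 := by rw [real_inner_comm]; exact hL x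
    have h4 : ‖η • x‖ ^ 2 = η ^ 2 * ‖x‖ ^ 2 := by
      simp [norm_smul, abs_of_pos hη, mul_pow]
    have h5 : ‖γ • x‖ ^ 2 = γ ^ 2 * ‖x‖ ^ 2 := by
      simp [norm_smul, abs_of_pos (hη.trans_le hγ), mul_pow]
    rw [h1, h2, h4, h5]
    nlinarith [mul_nonneg (sub_nonneg.2 hγ) (neg_nonneg.2 h3),
      mul_nonneg (mul_nonneg (sub_nonneg.2 hγ) (by linarith : (0:ℝ) ≤ γ + η)) (sq_nonneg ‖x‖)]
  exact (pow_le_pow_iff_left₀ (norm_nonneg _) (norm_nonneg _) two_ne_zero).mp key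
end

section
/- Let L be a real n×n matrix with ⟨Lx, x⟩ ≤ 0 for all x, let η > 0, β ∈ ℝ, and set γ* = (η² + β²)/η. Then the preconditioned Schur complement P = [ηI - L + β²(ηI - L)⁻¹](γ*I - L)⁻¹ satisfies ‖P‖ ≤ 1 + β²/(γ* η). -/
open Matrix

lemma toE_smul_one_sub {n : ℕ} (γ : ℝ) (L : Matrix (Fin n) (Fin n) ℝ)
    (y : EuclideanSpace ℝ (Fin n)) :
    toE (γ • (1 : Matrix (Fin n) (Fin n) ℝ) - L) y = γ • y - toE L y := by
  simp [toE, map_sub, _root_.map_smul]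

lemma toE_mul_apply {n : ℕ} (A B : Matrix (Fin n) (Fin n) ℝ)
    (y : EuclideanSpace ℝ (Fin n)) :
    toE (A * B) y = toE A (toE B y) := by
  simp only [toE, _root_.map_mul]
  rfl

lemma sq_expand {n : ℕ} (L : Matrix (Fin n) (Fin n) ℝ) (γ : ℝ)
    (y : EuclideanSpace ℝ (Fin n)) :
    ‖γ • y - toE L y‖ ^ 2
      = γ ^ 2 * ‖y‖ ^ 2 - 2 * γ * inner ℝ (toE L y) y + ‖toE L y‖ ^ 2 := by
  rw [norm_sub_sq_real, real_inner_smul_left, real_inner_comm, norm_smul]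
  simp [mul_pow]
  ring

lemma lower_bound {n : ℕ} (L : Matrix (Fin n) (Fin n) ℝ)
    (hL : ∀ x : EuclideanSpace ℝ (Fin n), inner ℝ (toE L x) x ≤ (0 : ℝ))
    {γ : ℝ} (hγ : 0 < γ) (y : EuclideanSpace ℝ (Fin n)) :
    γ * ‖y‖ ≤ ‖γ • y - toE L y‖ := by
  have h1 := sq_expand L γ y
  have h2 := hL y
  nlinarith [norm_nonneg (γ • y - toE L y), norm_nonneg y, norm_nonneg (toE L y),
    mul_nonneg hγ.le (norm_nonneg y)]

lemma L_bound {n : ℕ} (L : Matrix (Fin n) (Fin n) ℝ)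
    (hL : ∀ x : EuclideanSpace ℝ (Fin n), inner ℝ (toE L x) x ≤ (0 : ℝ))
    {γ : ℝ} (hγ : 0 < γ) (y : EuclideanSpace ℝ (Fin n)) :
    ‖toE L y‖ ≤ ‖γ • y - toE L y‖ := by
  have h1 := sq_expand L γ y
  have h2 := hL y
  nlinarith [norm_nonneg (γ • y - toE L y), norm_nonneg y, norm_nonneg (toE L y)]

lemma isUnit_det_smul_one_sub {n : ℕ} (L : Matrix (Fin n) (Fin n) ℝ)
    (hL : ∀ x : EuclideanSpace ℝ (Fin n), inner ℝ (toE L x) x ≤ (0 : ℝ))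
    {γ : ℝ} (hγ : 0 < γ) :
    IsUnit (γ • (1 : Matrix (Fin n) (Fin n) ℝ) - L).det := by
  rw [isUnit_iff_ne_zero]
  intro hdet
  obtain ⟨v, hv, hv0⟩ := Matrix.exists_mulVec_eq_zero_iff.2 hdet
  set y : EuclideanSpace ℝ (Fin n) := (WithLp.equiv 2 _).symm v with hy
  have hz : toE (γ • (1 : Matrix (Fin n) (Fin n) ℝ) - L) y = 0 := by
    rw [toE, hy, WithLp.equiv_symm_apply, Matrix.toEuclideanCLM_toLp, hv0]
    simp
  have hb := lower_bound L hL hγ y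
  rw [← toE_smul_one_sub, hz, norm_zero] at hb
  have hy0 : y = 0 := by
    have : ‖y‖ ≤ 0 := by nlinarith [norm_nonneg y]
    exact norm_le_zero_iff.1 this
  apply hv
  have hveq : v = (WithLp.equiv 2 (Fin n → ℝ)) y := rfl
  rw [hveq, hy0]
  simp

lemma matrix_identity {n : ℕ} (L : Matrix (Fin n) (Fin n) ℝ)
    (η β γs : ℝ) (hη : η ≠ 0) (hγs0 : γs ≠ 0) (hγs : γs = (η ^ 2 + β ^ 2) / η)
    (hA : IsUnit (η • (1 : Matrix (Fin n) (Fin n) ℝ) - L).det)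
    (hM : IsUnit (γs • (1 : Matrix (Fin n) (Fin n) ℝ) - L).det) :
    (η • (1 : Matrix (Fin n) (Fin n) ℝ) - L
        + β ^ 2 • (η • (1 : Matrix (Fin n) (Fin n) ℝ) - L)⁻¹)
        * (γs • (1 : Matrix (Fin n) (Fin n) ℝ) - L)⁻¹
      = 1 + (β ^ 2 / η) • ((L * (η • (1 : Matrix (Fin n) (Fin n) ℝ) - L)⁻¹)
          * (γs • (1 : Matrix (Fin n) (Fin n) ℝ) - L)⁻¹) := by
  set A := η • (1 : Matrix (Fin n) (Fin n) ℝ) - L with hAdef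
  set M := γs • (1 : Matrix (Fin n) (Fin n) ℝ) - L with hMdef
  have hAA : A⁻¹ * A = 1 := Matrix.nonsing_inv_mul A hA
  have hAA' : A * A⁻¹ = 1 := Matrix.mul_nonsing_inv A hA
  have hMM : M * M⁻¹ = 1 := Matrix.mul_nonsing_inv M hM
  have comm : A * L = L * A := by
    simp [hAdef, sub_mul, mul_sub, Matrix.smul_mul, Matrix.mul_smul]
  have commInv : A⁻¹ * L = L * A⁻¹ := by
    calc A⁻¹ * L = A⁻¹ * L * (A * A⁻¹) := by rw [hAA', mul_one]
    _ = A⁻¹ * (L * A) * A⁻¹ := by rw [← mul_assoc, mul_assoc A⁻¹ L A]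
    _ = A⁻¹ * (A * L) * A⁻¹ := by rw [comm]
    _ = L * A⁻¹ := by rw [← mul_assoc A⁻¹ A L, hAA, one_mul]
  have key : A * A + β ^ 2 • (1 : Matrix (Fin n) (Fin n) ℝ)
      = A * M + (β ^ 2 / η) • L := by
    have e1 : η * γs = η ^ 2 + β ^ 2 := by
      rw [hγs]; field_simp
    simp only [hAdef, hMdef, sub_mul, mul_sub, Matrix.smul_mul, Matrix.mul_smul,
      one_mul, mul_one, smul_smul]
    match_scalars
    · linarith
    · field_simp
      linarith [e1]
    · ring
  have step1 : A + β ^ 2 • A⁻¹ = A⁻¹ * (A * A + β ^ 2 • (1 : Matrix (Fin n) (Fin n) ℝ)) := by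
    rw [mul_add, ← mul_assoc, hAA, one_mul, Matrix.mul_smul, mul_one]
  rw [step1, key, mul_add, add_mul, ← mul_assoc A⁻¹ A M, hAA, one_mul, hMM,
    Matrix.mul_smul, Matrix.smul_mul, commInv]

theorem stmt_2 {n : ℕ} (L : Matrix (Fin n) (Fin n) ℝ)
    (hL : ∀ x : EuclideanSpace ℝ (Fin n), inner ℝ (toE L x) x ≤ (0 : ℝ))
    (η β γs : ℝ) (hη : 0 < η) (hγs : γs = (η ^ 2 + β ^ 2) / η) :
    ‖toE ((η • (1 : Matrix (Fin n) (Fin n) ℝ) - L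
        + β ^ 2 • (η • (1 : Matrix (Fin n) (Fin n) ℝ) - L)⁻¹)
        * (γs • (1 : Matrix (Fin n) (Fin n) ℝ) - L)⁻¹)‖ ≤ 1 + β ^ 2 / (γs * η) := by
  have hγs_pos : 0 < γs := by
    rw [hγs]
    positivity
  set A := η • (1 : Matrix (Fin n) (Fin n) ℝ) - L with hAdef
  set M := γs • (1 : Matrix (Fin n) (Fin n) ℝ) - L with hMdef
  have hA : IsUnit A.det := isUnit_det_smul_one_sub L hL hη
  have hM : IsUnit M.det := isUnit_det_smul_one_sub L hL hγs_pos
  have hAA' : A * A⁻¹ = 1 := Matrix.mul_nonsing_inv A hA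
  have hMM : M * M⁻¹ = 1 := Matrix.mul_nonsing_inv M hM
  rw [matrix_identity L η β γs hη.ne' hγs_pos.ne' hγs hA hM]
  -- bound the pieces
  have hLA : ‖toE (L * A⁻¹)‖ ≤ 1 := by
    apply ContinuousLinearMap.opNorm_le_bound _ zero_le_one
    intro x
    set y := toE A⁻¹ x with hydef
    have h1 : toE (L * A⁻¹) x = toE L y := toE_mul_apply L A⁻¹ x
    have h2 : toE A y = x := by
      rw [hydef, ← toE_mul_apply, hAA', toE, _root_.map_one, ContinuousLinearMap.one_apply]
    have h3 := L_bound L hL hη y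
    rw [← toE_smul_one_sub, ← hAdef, h2] at h3
    rw [h1, one_mul]
    exact h3
  have hMinv : ‖toE M⁻¹‖ ≤ 1 / γs := by
    apply ContinuousLinearMap.opNorm_le_bound _ (by positivity)
    intro x
    set y := toE M⁻¹ x with hydef
    have h2 : toE M y = x := by
      rw [hydef, ← toE_mul_apply, hMM, toE, _root_.map_one, ContinuousLinearMap.one_apply]
    have h3 := lower_bound L hL hγs_pos y
    rw [← toE_smul_one_sub, ← hMdef, h2] at h3
    have h4 : ‖y‖ ≤ ‖x‖ / γs := by
      rw [le_div_iff₀ hγs_pos, mul_comm]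
      exact h3
    calc ‖y‖ ≤ ‖x‖ / γs := h4
    _ = 1 / γs * ‖x‖ := by ring
  have hc : (0:ℝ) ≤ β ^ 2 / η := by positivity
  have hmap : toE (1 + (β ^ 2 / η) • (L * A⁻¹ * M⁻¹))
      = 1 + (β ^ 2 / η) • (toE (L * A⁻¹) * toE M⁻¹) := by
    simp only [toE]
    rw [_root_.map_add, _root_.map_one, _root_.map_smul, _root_.map_mul]
  rw [hmap]
  have hnorm1 : ‖(1 : EuclideanSpace ℝ (Fin n) →L[ℝ] EuclideanSpace ℝ (Fin n))‖ ≤ 1 := by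
    rw [ContinuousLinearMap.one_def]
    exact ContinuousLinearMap.norm_id_le
  have hsmul : ‖(β ^ 2 / η) • (toE (L * A⁻¹) * toE M⁻¹)‖
      ≤ (β ^ 2 / η) * ‖toE (L * A⁻¹) * toE M⁻¹‖ := by
    have h := norm_smul_le (β ^ 2 / η) (toE (L * A⁻¹) * toE M⁻¹)
    rwa [Real.norm_of_nonneg hc] at h
  have hprod : ‖toE (L * A⁻¹) * toE M⁻¹‖ ≤ 1 * (1 / γs) :=
    (norm_mul_le _ _).trans (by gcongr)
  calc ‖(1 : EuclideanSpace ℝ (Fin n) →L[ℝ] EuclideanSpace ℝ (Fin n))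
        + (β ^ 2 / η) • (toE (L * A⁻¹) * toE M⁻¹)‖
      ≤ ‖(1 : EuclideanSpace ℝ (Fin n) →L[ℝ] EuclideanSpace ℝ (Fin n))‖
        + (β ^ 2 / η) * ‖toE (L * A⁻¹) * toE M⁻¹‖ := by
        refine (norm_add_le _ _).trans ?_
        linarith
    _ ≤ 1 + (β ^ 2 / η) * (1 * (1 / γs)) := by
        have := mul_le_mul_of_nonneg_left hprod hc
        linarith
    _ = 1 + β ^ 2 / (γs * η) := by
        rw [one_mul]
        field_simp
end

section
/- Let L₁, L₂ be real n×n matrices each with field of values in the closed left half-plane, and additionally assume ⟨L₁w, L₂w⟩ ≥ 0 for all w. Let η > 0, β ∈ ℝ, γ* = (η² + β²)/η, and let P = [ηI - L₂ + β²(ηI - L₁)⁻¹](γ*I - L₂)⁻¹. Then the smallest singular value of P is at least η²/(η² + β²). -/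
open Matrix RealInnerProductSpace

lemma toE_mul {n : ℕ} (A B : Matrix (Fin n) (Fin n) ℝ) (x : EuclideanSpace ℝ (Fin n)) :
    toE (A * B) x = toE A (toE B x) := by
  simp [toE, _root_.map_mul]

lemma toE_one {n : ℕ} (x : EuclideanSpace ℝ (Fin n)) :
    toE (1 : Matrix (Fin n) (Fin n) ℝ) x = x := by
  simp [toE]

lemma toE_smul_one {n : ℕ} (μ : ℝ) (x : EuclideanSpace ℝ (Fin n)) :
    toE (μ • (1 : Matrix (Fin n) (Fin n) ℝ)) x = μ • x := by
  simp [toE]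

lemma toE_sub {n : ℕ} (A B : Matrix (Fin n) (Fin n) ℝ) (x : EuclideanSpace ℝ (Fin n)) :
    toE (A - B) x = toE A x - toE B x := by
  simp [toE, map_sub]

lemma toE_add {n : ℕ} (A B : Matrix (Fin n) (Fin n) ℝ) (x : EuclideanSpace ℝ (Fin n)) :
    toE (A + B) x = toE A x + toE B x := by
  simp [toE, map_add]

lemma toE_smul {n : ℕ} (r : ℝ) (A : Matrix (Fin n) (Fin n) ℝ) (x : EuclideanSpace ℝ (Fin n)) :
    toE (r • A) x = r • toE A x := by
  simp [toE, _root_.map_smul]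

lemma isUnit_shift {n : ℕ} (S : Matrix (Fin n) (Fin n) ℝ) (μ : ℝ) (hμ : 0 < μ)
    (hS : ∀ x : EuclideanSpace ℝ (Fin n), inner ℝ (toE S x) x ≤ (0 : ℝ)) :
    IsUnit (μ • (1 : Matrix (Fin n) (Fin n) ℝ) - S) := by
  set M := μ • (1 : Matrix (Fin n) (Fin n) ℝ) - S with hM
  have hker : ∀ z : EuclideanSpace ℝ (Fin n), toE M z = 0 → z = 0 := by
    intro z hz
    have h1 : (inner ℝ (toE M z) z : ℝ) = 0 := by rw [hz]; simp
    have h2 : (inner ℝ (toE M z) z : ℝ) = μ * ‖z‖ ^ 2 - inner ℝ (toE S z) z := by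
      rw [hM, toE_sub, toE_smul_one, inner_sub_left, real_inner_smul_left,
        real_inner_self_eq_norm_sq]
    have h3 := hS z
    have h4 : ‖z‖ ^ 2 ≤ 0 := by nlinarith
    have : ‖z‖ = 0 := by nlinarith [norm_nonneg z, sq_nonneg ‖z‖]
    exact norm_eq_zero.mp this
  rw [← Matrix.mulVec_injective_iff_isUnit]
  intro x y hxy
  have hz : toE M ((WithLp.equiv 2 _).symm (x - y)) = 0 := by
    show (Matrix.toEuclideanCLM (𝕜 := ℝ) M) _ = 0
    rw [show (WithLp.equiv 2 _).symm (x - y) = WithLp.toLp 2 (x - y) from rfl,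
      Matrix.toEuclideanCLM_toLp]
    rw [Matrix.mulVec_sub, hxy]
    simp
  have h0 := hker _ hz
  have : x - y = 0 := by simpa using congrArg (WithLp.equiv 2 _) h0
  exact sub_eq_zero.mp this

lemma real_key (η g U B C p s t : ℝ) (hη : 0 < η) (hg : η ≤ g)
    (hp : p ≤ 0) (hts : η * s ≤ t) (hsUB : s ≤ U * B) :
    η^2*(η^2*g^2*U^2 + g^2*C^2 + B^2 - 2*η*g^2*p - 2*η*g*s + 2*g*t) ≤
      g^2*(η^2*g^2*U^2 + η^2*C^2 + B^2 - 2*η^2*g*p - 2*η*g*s + 2*η*t) := by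
  have hg0 : 0 < g := lt_of_lt_of_le hη hg
  have hgη : 0 ≤ g - η := by linarith
  have hsum : 0 < g + η := by linarith
  have key : (g+η) * (g^2*(η^2*g^2*U^2 + η^2*C^2 + B^2 - 2*η^2*g*p - 2*η*g*s + 2*η*t)
      - η^2*(η^2*g^2*U^2 + g^2*C^2 + B^2 - 2*η*g^2*p - 2*η*g*s + 2*g*t)) =
      2*η^2*g^2*(g-η)*(g+η)*(-p) + 2*η*g*(g^2-η^2)*(t-η*s)
      + 2*η*g^2*(g-η)*(g+η)*(U*B-s)
      + (g-η)*((η*g*(g+η)*U - g*B)^2 + η*(2*g+η)*B^2) := by ring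
  have h1 : 0 ≤ 2*η^2*g^2*(g-η)*(g+η)*(-p) := by
    apply mul_nonneg _ (by linarith)
    apply mul_nonneg _ hsum.le
    apply mul_nonneg _ hgη
    positivity
  have hg2 : 0 ≤ g^2 - η^2 := by nlinarith
  have h2 : 0 ≤ 2*η*g*(g^2-η^2)*(t-η*s) := by
    apply mul_nonneg _ (by linarith)
    apply mul_nonneg _ hg2
    positivity
  have h3 : 0 ≤ 2*η*g^2*(g-η)*(g+η)*(U*B-s) := by
    apply mul_nonneg _ (by linarith)
    apply mul_nonneg _ hsum.le
    apply mul_nonneg _ hgη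
    positivity
  have h4 : 0 ≤ (g-η)*((η*g*(g+η)*U - g*B)^2 + η*(2*g+η)*B^2) := by
    apply mul_nonneg hgη
    have : 0 ≤ η*(2*g+η)*B^2 := by positivity
    positivity
  nlinarith [key, h1, h2, h3, h4, hsum]


set_option maxHeartbeats 1000000 in
/-- The smallest singular value of the preconditioned Schur complement is at
least `η² / (η² + β²)`, stated as `s ‖v‖ ≤ ‖P v‖` for all `v`. -/
theorem stmt_4 {n : ℕ} (L₁ L₂ : Matrix (Fin n) (Fin n) ℝ)
    (hL₁ : ∀ x : EuclideanSpace ℝ (Fin n), inner ℝ (toE L₁ x) x ≤ (0 : ℝ))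
    (hL₂ : ∀ x : EuclideanSpace ℝ (Fin n), inner ℝ (toE L₂ x) x ≤ (0 : ℝ))
    (hL₁₂ : ∀ w : EuclideanSpace ℝ (Fin n), (0 : ℝ) ≤ inner ℝ (toE L₁ w) (toE L₂ w))
    (η β γs : ℝ) (hη : 0 < η) (hγs : γs = (η ^ 2 + β ^ 2) / η) :
    ∀ v : EuclideanSpace ℝ (Fin n),
      η ^ 2 / (η ^ 2 + β ^ 2) * ‖v‖ ≤
        ‖toE ((η • (1 : Matrix (Fin n) (Fin n) ℝ) - L₂
          + β ^ 2 • (η • (1 : Matrix (Fin n) (Fin n) ℝ) - L₁)⁻¹)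
          * (γs • (1 : Matrix (Fin n) (Fin n) ℝ) - L₂)⁻¹) v‖ := by
  intro v
  set g := γs with hgdef
  have hb2 : (0:ℝ) < η ^ 2 + β ^ 2 := by positivity
  have hg0 : 0 < g := by rw [hγs]; positivity
  have hηg : η * g = η ^ 2 + β ^ 2 := by rw [hγs]; field_simp
  have hg : η ≤ g := by nlinarith
  set A := η • (1 : Matrix (Fin n) (Fin n) ℝ) - L₁ with hA
  set G := g • (1 : Matrix (Fin n) (Fin n) ℝ) - L₂ with hG
  have hAunit : IsUnit A := isUnit_shift L₁ η hη hL₁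
  have hGunit : IsUnit G := isUnit_shift L₂ g hg0 hL₂
  set w : EuclideanSpace ℝ (Fin n) := toE G⁻¹ v with hw
  set u : EuclideanSpace ℝ (Fin n) := toE A⁻¹ w with hu
  have hGw : toE G w = v := by
    rw [hw, ← toE_mul, Matrix.mul_nonsing_inv G (((Matrix.isUnit_iff_isUnit_det G).mp hGunit)),
      toE_one]
  have hAu : toE A u = w := by
    rw [hu, ← toE_mul, Matrix.mul_nonsing_inv A (((Matrix.isUnit_iff_isUnit_det A).mp hAunit)),
      toE_one]
  set b : EuclideanSpace ℝ (Fin n) := toE L₂ w with hb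
  set c : EuclideanSpace ℝ (Fin n) := toE L₁ u with hc
  have hwu : w = η • u - c := by
    rw [← hAu, hA, toE_sub, toE_smul_one, hc]
  have hveq : v = (η*g) • u - g • c - b := by
    rw [← hGw, hG, toE_sub, toE_smul_one, ← hb, hwu]
    module
  have hPv : toE ((η • (1 : Matrix (Fin n) (Fin n) ℝ) - L₂ + β ^ 2 • A⁻¹) * G⁻¹) v
      = (η*g) • u - η • c - b := by
    rw [toE_mul, ← hw, toE_add, toE_sub, toE_smul_one, toE_smul, ← hu, ← hb, hwu, hηg]
    module
  rw [hPv]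
  -- inner product abbreviations
  set U := ‖u‖
  set B := ‖b‖
  set C := ‖c‖
  have hp : ⟪u, c⟫ ≤ 0 := by
    have := hL₁ u; rw [← hc] at this; rwa [real_inner_comm]
  have hts : η * ⟪u, b⟫ ≤ ⟪c, b⟫ := by
    have := hL₂ w; rw [← hb] at this
    rw [hwu, inner_sub_right, real_inner_smul_right] at this
    rw [real_inner_comm u b] at this
    rw [real_inner_comm c b] at this
    linarith
  have hsUB : ⟪u, b⟫ ≤ U * B := real_inner_le_norm u b
  have hv2 : ‖v‖^2 = η^2*g^2*U^2 + g^2*C^2 + B^2 - 2*η*g^2*⟪u,c⟫ - 2*η*g*⟪u,b⟫ + 2*g*⟪c,b⟫ := by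
    rw [← real_inner_self_eq_norm_sq, hveq]
    simp only [inner_sub_left, inner_sub_right, real_inner_smul_left, real_inner_smul_right]
    simp only [real_inner_self_eq_norm_sq]
    rw [real_inner_comm c u, real_inner_comm b u, real_inner_comm b c]
    ring
  have hPv2 : ‖(η*g) • u - η • c - b‖^2
      = η^2*g^2*U^2 + η^2*C^2 + B^2 - 2*η^2*g*⟪u,c⟫ - 2*η*g*⟪u,b⟫ + 2*η*⟪c,b⟫ := by
    rw [← real_inner_self_eq_norm_sq]
    simp only [inner_sub_left, inner_sub_right, real_inner_smul_left, real_inner_smul_right]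
    simp only [real_inner_self_eq_norm_sq]
    rw [real_inner_comm c u, real_inner_comm b u, real_inner_comm b c]
    ring
  have hkey := real_key η g U B C ⟪u,c⟫ ⟪u,b⟫ ⟪c,b⟫ hη hg hp hts hsUB
  rw [← hv2, ← hPv2] at hkey
  -- conclude
  have hfrac : η ^ 2 / (η ^ 2 + β ^ 2) = η / g := by
    rw [← hηg]; field_simp
  rw [hfrac, div_mul_eq_mul_div, div_le_iff₀ hg0]
  have ha : 0 ≤ η * ‖v‖ := by positivity
  have hd : 0 ≤ ‖(η*g) • u - η • c - b‖ * g := by positivity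
  have hsq : (η * ‖v‖)^2 ≤ (‖(η*g) • u - η • c - b‖ * g)^2 := by nlinarith [hkey]
  nlinarith [hsq, ha, hd]
end

section
/- Let L be a real n×n matrix with ⟨Lx, x⟩ ≤ 0 for all x, and let η, δ, β > 0 with γ* = (η²+β²)/δ. Then the condition number of P = [(ηI - L)² + β²I](δI - L)⁻¹(γ*I - L)⁻¹ satisfies κ(P) ≤ (1/(2η))(δ + (η²+β²)/δ). -/
open Matrix

lemma aux_prodid {n : ℕ} (L : Matrix (Fin n) (Fin n) ℝ) (s t : ℝ) :
    (s • (1 : Matrix (Fin n) (Fin n) ℝ) - L) * (t • 1 - L)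
      = L ^ 2 + (s * t) • 1 - (s + t) • L := by
  simp only [sub_mul, mul_sub, smul_mul_assoc, mul_smul_comm, smul_smul,
    one_mul, mul_one, pow_two]
  module

lemma aux_norm_sq {E : Type*} [NormedAddCommGroup E] [InnerProductSpace ℝ E]
    (u v : E) (t : ℝ) :
    ‖u - t • v‖ ^ 2 = ‖u‖ ^ 2 - 2 * t * inner ℝ u v + t ^ 2 * ‖v‖ ^ 2 := by
  rw [@norm_sub_sq_real, real_inner_smul_right, norm_smul, Real.norm_eq_abs,
    mul_pow, sq_abs]
  ring

lemma aux_sqle {p q : ℝ} (hp : 0 ≤ p) (hq : 0 ≤ q) (h : p ^ 2 ≤ q ^ 2) : p ≤ q := by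
  nlinarith

lemma aux_key {E : Type*} [NormedAddCommGroup E] [InnerProductSpace ℝ E]
    (u v : E) (hg : inner ℝ u v ≤ (0 : ℝ)) (a b : ℝ) (ha : 0 < a) (hab : a ≤ b) :
    ‖u - a • v‖ ≤ ‖u - b • v‖ ∧ a * ‖u - b • v‖ ≤ b * ‖u - a • v‖ := by
  have hb : 0 < b := ha.trans_le hab
  have e1 := aux_norm_sq u v a
  have e2 := aux_norm_sq u v b
  constructor
  · refine aux_sqle (norm_nonneg _) (norm_nonneg _) ?_
    rw [e1, e2]
    nlinarith [mul_nonneg (sub_nonneg.2 hab) (neg_nonneg.2 hg), sq_nonneg ‖v‖,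
      mul_nonneg (mul_nonneg (sub_nonneg.2 hab) (by linarith : (0:ℝ) ≤ a + b)) (sq_nonneg ‖v‖)]
  · refine aux_sqle (mul_nonneg ha.le (norm_nonneg _)) (mul_nonneg hb.le (norm_nonneg _)) ?_
    rw [mul_pow, mul_pow, e1, e2]
    nlinarith [mul_nonneg (mul_nonneg (mul_nonneg ha.le hb.le) (sub_nonneg.2 hab)) (neg_nonneg.2 hg),
      mul_nonneg (mul_nonneg (sub_nonneg.2 hab) (by linarith : (0:ℝ) ≤ a + b)) (sq_nonneg ‖u‖)]

lemma aux_isUnit {n : ℕ} (M : Matrix (Fin n) (Fin n) ℝ)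
    (h : Function.Injective (toE M)) : IsUnit M := by
  rw [← Matrix.mulVec_injective_iff_isUnit]
  intro x y hxy
  have h2 : toE M ((WithLp.equiv 2 _).symm x) = toE M ((WithLp.equiv 2 _).symm y) := by
    simp only [toE, WithLp.equiv_symm_apply, Matrix.toEuclideanCLM_toLp, Matrix.toLin'_apply, hxy]
  exact (WithLp.equiv 2 _).symm.injective (h h2)

lemma aux_inj {n : ℕ} (M : Matrix (Fin n) (Fin n) ℝ)
    (h : IsUnit M) : Function.Injective (toE M) := by
  have hdet := (Matrix.isUnit_iff_isUnit_det M).mp h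
  intro x y hxy
  have h2 : toE (M⁻¹ * M) x = toE (M⁻¹ * M) y := by
    simp only [toE, _root_.map_mul, ContinuousLinearMap.mul_apply]
    rw [show Matrix.toEuclideanCLM (𝕜 := ℝ) M x = Matrix.toEuclideanCLM (𝕜 := ℝ) M y from hxy]
  simpa [toE, Matrix.nonsing_inv_mul M hdet] using h2

lemma aux_app {n : ℕ} (L : Matrix (Fin n) (Fin n) ℝ) (c s : ℝ)
    (x : EuclideanSpace ℝ (Fin n)) :
    toE (L ^ 2 + c • (1 : Matrix (Fin n) (Fin n) ℝ) - s • L) x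
      = (toE L) ((toE L) x) + c • x - s • (toE L) x := by
  simp only [toE, map_sub, map_add, _root_.map_smul, map_pow, _root_.map_one]
  simp [ContinuousLinearMap.sub_apply, ContinuousLinearMap.add_apply,
    ContinuousLinearMap.smul_apply, ContinuousLinearMap.one_apply, pow_two,
    ContinuousLinearMap.mul_apply]

lemma aux_shift_app {n : ℕ} (L : Matrix (Fin n) (Fin n) ℝ) (s : ℝ)
    (x : EuclideanSpace ℝ (Fin n)) :
    toE (s • (1 : Matrix (Fin n) (Fin n) ℝ) - L) x = s • x - (toE L) x := by
  simp only [toE, map_sub, _root_.map_smul, _root_.map_one]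
  simp

theorem stmt_6 {n : ℕ} (L : Matrix (Fin n) (Fin n) ℝ)
    (hL : ∀ x : EuclideanSpace ℝ (Fin n), inner ℝ (toE L x) x ≤ (0 : ℝ))
    (η δ β γs : ℝ) (hη : 0 < η) (hδ : 0 < δ) (hβ : 0 < β)
    (hγs : γs = (η ^ 2 + β ^ 2) / δ)
    (P : Matrix (Fin n) (Fin n) ℝ)
    (hP : P = ((η • (1 : Matrix (Fin n) (Fin n) ℝ) - L) ^ 2
          + β ^ 2 • (1 : Matrix (Fin n) (Fin n) ℝ))
        * (δ • (1 : Matrix (Fin n) (Fin n) ℝ) - L)⁻¹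
        * (γs • (1 : Matrix (Fin n) (Fin n) ℝ) - L)⁻¹) :
    ‖toE P‖ * ‖toE P⁻¹‖ ≤ 1 / (2 * η) * (δ + (η ^ 2 + β ^ 2) / δ) := by
  set c : ℝ := η ^ 2 + β ^ 2 with hc
  set a : ℝ := 2 * η with ha
  set b : ℝ := δ + γs with hb
  have hγpos : 0 < γs := by
    rw [hγs]; positivity
  have hapos : 0 < a := by positivity
  have hab : a ≤ b := by
    have key : b - a = ((δ - η) ^ 2 + β ^ 2) / δ := by
      rw [hb, ha, hγs]; field_simp; ring
    nlinarith [sq_nonneg (δ - η), div_nonneg (by positivity : (0:ℝ) ≤ (δ - η) ^ 2 + β ^ 2) hδ.le]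
  have hδγ : γs * δ = c := by
    rw [hγs]; field_simp
  -- the two key matrices
  set Ma : Matrix (Fin n) (Fin n) ℝ := L ^ 2 + c • 1 - a • L with hMa
  set Mb : Matrix (Fin n) (Fin n) ℝ := L ^ 2 + c • 1 - b • L with hMb
  have hMaEq : (η • (1 : Matrix (Fin n) (Fin n) ℝ) - L) ^ 2 + β ^ 2 • 1 = Ma := by
    rw [pow_two, aux_prodid, hMa, ha, hc]
    module
  have hMbEq : (γs • (1 : Matrix (Fin n) (Fin n) ℝ) - L) * (δ • 1 - L) = Mb := by
    rw [aux_prodid, hδγ, hMb, hb]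
    module
  -- inner product sign
  have hg : ∀ x : EuclideanSpace ℝ (Fin n),
      inner ℝ ((toE L) ((toE L) x) + c • x) ((toE L) x) ≤ (0 : ℝ) := by
    intro x
    rw [inner_add_left, real_inner_smul_left]
    have h1 := hL ((toE L) x)
    have h2 := hL x
    rw [real_inner_comm] at h2
    nlinarith [mul_nonneg (by positivity : (0:ℝ) ≤ c) (neg_nonneg.2 h2)]
  -- key norm inequalities
  have key1 : ∀ x, ‖toE Ma x‖ ≤ ‖toE Mb x‖ := by
    intro x
    rw [hMa, hMb, aux_app, aux_app]
    exact (aux_key _ _ (hg x) a b hapos hab).1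
  have key2 : ∀ x, a * ‖toE Mb x‖ ≤ b * ‖toE Ma x‖ := by
    intro x
    rw [hMa, hMb, aux_app, aux_app]
    exact (aux_key _ _ (hg x) a b hapos hab).2
  -- invertibility of shift matrices
  have hshift : ∀ s : ℝ, 0 < s → IsUnit (s • (1 : Matrix (Fin n) (Fin n) ℝ) - L) := by
    intro s hs
    refine aux_isUnit _ ?_
    rw [injective_iff_map_eq_zero]
    intro x hx
    rw [aux_shift_app, sub_eq_zero] at hx
    have h1 := hL x
    have h2 : inner ℝ ((toE L) x) x = s * ‖x‖ ^ 2 := by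
      rw [← hx, real_inner_smul_left, real_inner_self_eq_norm_sq]
    have h3 : ‖x‖ ^ 2 ≤ 0 := by nlinarith
    have : ‖x‖ = 0 := by nlinarith [norm_nonneg x]
    exact norm_eq_zero.mp this
  have hUb : IsUnit Mb := by
    rw [← hMbEq]; exact (hshift γs hγpos).mul (hshift δ hδ)
  have hUa : IsUnit Ma := by
    refine aux_isUnit _ ?_
    rw [injective_iff_map_eq_zero]
    intro x hx
    have h1 := key2 x
    rw [hx, norm_zero, mul_zero] at h1
    have h2 : ‖toE Mb x‖ = 0 := le_antisymm (by nlinarith [norm_nonneg (toE Mb x)]) (norm_nonneg _)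
    have h3 : toE Mb x = 0 := norm_eq_zero.mp h2
    have h4 : toE Mb x = toE Mb 0 := by simpa using h3
    exact aux_inj Mb hUb h4
  have hdetb := (Matrix.isUnit_iff_isUnit_det Mb).mp hUb
  have hdeta := (Matrix.isUnit_iff_isUnit_det Ma).mp hUa
  -- rewrite P
  have hP2 : P = Ma * Mb⁻¹ := by
    rw [hP, hMaEq, mul_assoc, ← Matrix.mul_inv_rev, hMbEq]
  have hPinv : P⁻¹ = Mb * Ma⁻¹ := by
    rw [hP2, Matrix.mul_inv_rev, Matrix.nonsing_inv_nonsing_inv _ hdetb]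
  -- norm bounds
  have hn1 : ‖toE P‖ ≤ 1 := by
    refine ContinuousLinearMap.opNorm_le_bound _ zero_le_one fun y => ?_
    have hy : toE Mb (toE Mb⁻¹ y) = y := by
      have : toE (Mb * Mb⁻¹) y = y := by
        rw [Matrix.mul_nonsing_inv _ hdetb]
        simp [toE]
      simpa [toE, _root_.map_mul, ContinuousLinearMap.mul_apply] using this
    have hPy : toE P y = toE Ma (toE Mb⁻¹ y) := by
      rw [hP2]
      simp [toE, _root_.map_mul, ContinuousLinearMap.mul_apply]
    rw [hPy, one_mul]
    calc ‖toE Ma (toE Mb⁻¹ y)‖ ≤ ‖toE Mb (toE Mb⁻¹ y)‖ := key1 _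
      _ = ‖y‖ := by rw [hy]
  have hn2 : ‖toE P⁻¹‖ ≤ b / a := by
    refine ContinuousLinearMap.opNorm_le_bound _ (by positivity) fun y => ?_
    have hy : toE Ma (toE Ma⁻¹ y) = y := by
      have : toE (Ma * Ma⁻¹) y = y := by
        rw [Matrix.mul_nonsing_inv _ hdeta]
        simp [toE]
      simpa [toE, _root_.map_mul, ContinuousLinearMap.mul_apply] using this
    have hPy : toE P⁻¹ y = toE Mb (toE Ma⁻¹ y) := by
      rw [hPinv]
      simp [toE, _root_.map_mul, ContinuousLinearMap.mul_apply]
    rw [hPy]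
    have h2 := key2 (toE Ma⁻¹ y)
    rw [hy] at h2
    rw [div_mul_eq_mul_div, le_div_iff₀ hapos, mul_comm]
    linarith
  have hrhs : b / a = 1 / (2 * η) * (δ + (η ^ 2 + β ^ 2) / δ) := by
    rw [hb, ha, hγs]
    ring
  rw [← hrhs]
  calc ‖toE P‖ * ‖toE P⁻¹‖ ≤ 1 * (b / a) :=
        mul_le_mul hn1 hn2 (norm_nonneg _) zero_le_one
    _ = b / a := one_mul _
end

section
/- Let L₁, L₂ be real n×n matrices with fields of values in the closed left half-plane and ⟨L₁w, L₂w⟩ ≥ 0 for all w, and let η > 0, γ ≥ η. Then for all w, ‖(γηI + L₂L₁)w - (ηL₂ + γL₁)w‖² ≥ γ²‖L₁w‖² - 2γ²η⟨L₁w, w⟩ - 2γ⟨L₂L₁w, L₁w⟩ + 2γη⟨L₁w, L₂w⟩, i.e., the denominator lower bound used in the Schur complement conditioning proof holds. -/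
open Matrix

theorem stmt_9 {n : ℕ} (L₁ L₂ : Matrix (Fin n) (Fin n) ℝ)
    (hL₁ : ∀ x : EuclideanSpace ℝ (Fin n), inner ℝ (toE L₁ x) x ≤ (0 : ℝ))
    (hL₂ : ∀ x : EuclideanSpace ℝ (Fin n), inner ℝ (toE L₂ x) x ≤ (0 : ℝ))
    (hL₁₂ : ∀ w : EuclideanSpace ℝ (Fin n), (0 : ℝ) ≤ inner ℝ (toE L₁ w) (toE L₂ w))
    (η γ : ℝ) (hη : 0 < η) (hγ : η ≤ γ) :
    ∀ w : EuclideanSpace ℝ (Fin n),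
      γ ^ 2 * ‖toE L₁ w‖ ^ 2
        - 2 * γ ^ 2 * η * inner ℝ (toE L₁ w) w
        - 2 * γ * inner ℝ (toE (L₂ * L₁) w) (toE L₁ w)
        + 2 * γ * η * inner ℝ (toE L₁ w) (toE L₂ w)
      ≤ ‖toE ((γ * η) • (1 : Matrix (Fin n) (Fin n) ℝ) + L₂ * L₁) w
          - toE (η • L₂ + γ • L₁) w‖ ^ 2 := by
  intro w
  set a := toE L₁ w with ha
  set b := toE L₂ w with hb
  set c := toE (L₂ * L₁) w with hc
  have hvec : toE ((γ * η) • (1 : Matrix (Fin n) (Fin n) ℝ) + L₂ * L₁) w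
      - toE (η • L₂ + γ • L₁) w
      = ((γ * η) • w - η • b + c) - γ • a := by
    simp only [toE, _root_.map_add, _root_.map_smul, _root_.map_one, ha, hb, hc]
    simp only [ContinuousLinearMap.add_apply, ContinuousLinearMap.smul_apply,
      ContinuousLinearMap.one_apply]
    abel
  rw [hvec]
  set u : EuclideanSpace ℝ (Fin n) := (γ * η) • w - η • b + c with hu
  have expand : ‖u - γ • a‖ ^ 2
      = ‖u‖ ^ 2 - 2 * γ * inner ℝ u a + γ ^ 2 * ‖a‖ ^ 2 := by
    rw [← real_inner_self_eq_norm_sq, ← real_inner_self_eq_norm_sq,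
      ← real_inner_self_eq_norm_sq]
    simp only [inner_sub_left, inner_sub_right, real_inner_smul_left,
      real_inner_smul_right]
    rw [real_inner_comm u a]
    ring
  have hinner : inner ℝ u a
      = γ * η * inner ℝ w a - η * inner ℝ b a + inner ℝ c a := by
    simp only [hu, inner_sub_left, inner_add_left, real_inner_smul_left]
  have h0 : (0 : ℝ) ≤ ‖u‖ ^ 2 := by positivity
  rw [real_inner_comm a w, real_inner_comm a b] at hinner
  rw [expand, hinner]
  nlinarith [h0]
end

section
/- Let L be a real symmetric negative semi-definite n×n matrix, η > 0, β ∈ ℝ, and γ* = η + β²/η. Then the condition number of P = [(ηI - L)² + β²I]((ηI - L)(γ*I - L))⁻¹ satisfies κ(P) ≤ (1/2)(1 + √(1 + β²/η²)). -/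
open Matrix

lemma norm_sq_toE {n : ℕ} (Q : Matrix (Fin n) (Fin n) ℝ) (x : EuclideanSpace ℝ (Fin n)) :
    ‖toE Q x‖ ^ 2 = (WithLp.equiv 2 _ x) ⬝ᵥ (Qᵀ * Q) *ᵥ (WithLp.equiv 2 _ x) := by
  rw [← real_inner_self_eq_norm_sq]
  set v := WithLp.equiv 2 _ x with hv
  have happ : WithLp.equiv 2 _ (toE Q x) = Q *ᵥ v := Matrix.ofLp_toEuclideanCLM (𝕜 := ℝ) Q x
  have h1 : (inner ℝ (toE Q x) (toE Q x) : ℝ) = (Q *ᵥ v) ⬝ᵥ (Q *ᵥ v) := by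
    simp only [inner, dotProduct, ← happ]
    exact Finset.sum_congr rfl fun i _ => mul_comm _ _
  rw [h1]
  conv_rhs => rw [← mulVec_mulVec, dotProduct_mulVec, vecMul_transpose]

lemma norm_toE_le {n : ℕ} (Q : Matrix (Fin n) (Fin n) ℝ) (c : ℝ) (hc : 0 ≤ c)
    (h : (c^2 • (1 : Matrix (Fin n) (Fin n) ℝ) - Qᵀ * Q).PosSemidef) : ‖toE Q‖ ≤ c := by
  apply ContinuousLinearMap.opNorm_le_bound _ hc
  intro x
  set v := WithLp.equiv 2 _ x with hv
  have h2 := h.dotProduct_mulVec_nonneg v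
  simp only [star_trivial, sub_mulVec, smul_mulVec, one_mulVec, dotProduct_sub,
    dotProduct_smul, smul_eq_mul, sub_nonneg] at h2
  have hx : v ⬝ᵥ v = ‖x‖ ^ 2 := by
    rw [← real_inner_self_eq_norm_sq]
    simp only [inner, dotProduct]
    exact Finset.sum_congr rfl fun i _ => mul_comm _ _
  have key : ‖toE Q x‖ ^ 2 ≤ (c * ‖x‖) ^ 2 := by
    rw [norm_sq_toE]
    calc (WithLp.equiv 2 _ x) ⬝ᵥ (Qᵀ * Q) *ᵥ (WithLp.equiv 2 _ x) ≤ c ^ 2 * (v ⬝ᵥ v) := h2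
    _ = (c * ‖x‖) ^ 2 := by rw [hx]; ring
  have h3 : (0:ℝ) ≤ c * ‖x‖ := by positivity
  nlinarith [norm_nonneg (toE Q x)]

lemma psd_smul {n : ℕ} {M : Matrix (Fin n) (Fin n) ℝ} (hM : M.PosSemidef) {c : ℝ} (hc : 0 ≤ c) :
    (c • M).PosSemidef := by
  refine .of_dotProduct_mulVec_nonneg ?_ fun x => ?_
  · show (c • M)ᴴ = c • M
    rw [conjTranspose_smul, hM.1.eq, star_trivial]
  · rw [smul_mulVec, dotProduct_smul, smul_eq_mul]
    exact mul_nonneg hc (by simpa using hM.dotProduct_mulVec_nonneg x)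

lemma comm_inv {n : ℕ} {X D : Matrix (Fin n) (Fin n) ℝ} (h : X * D = D * X)
    (hD : IsUnit D.det) : X * D⁻¹ = D⁻¹ * X := by
  have h1 : D * D⁻¹ = 1 := mul_nonsing_inv _ hD
  have h2 : D⁻¹ * D = 1 := nonsing_inv_mul _ hD
  calc X * D⁻¹ = D⁻¹ * D * (X * D⁻¹) := by rw [h2, one_mul]
  _ = D⁻¹ * (D * X) * D⁻¹ := by noncomm_ring
  _ = D⁻¹ * (X * D) * D⁻¹ := by rw [h]
  _ = D⁻¹ * X * (D * D⁻¹) := by noncomm_ring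
  _ = D⁻¹ * X := by rw [h1, mul_one]

lemma shuffle {R : Type*} [Ring R] (x w e : R) (hxw : x * w = w * x) (hxe : x * e = e * x)
    (hew : e * w = w * e) : x * x * w * (e * e) = x * e * ((w * (e * x))) := by
  have h1 : x * x * w * (e * e) = x * (x * w * e * e) := by noncomm_ring
  have h2 : x * e * (w * (e * x)) = x * (e * w * e * x) := by noncomm_ring
  rw [h1, h2]
  congr 1
  calc x * w * e * e = w * x * e * e := by rw [hxw]
  _ = w * (x * e) * e := by rw [mul_assoc w x e]
  _ = w * (e * x) * e := by rw [hxe]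
  _ = w * e * (x * e) := by rw [← mul_assoc w e x, mul_assoc (w * e) x e]
  _ = w * e * (e * x) := by rw [hxe]
  _ = e * w * (e * x) := by rw [← hew]
  _ = e * w * e * x := by rw [← mul_assoc]

lemma sq_expand_s14 {n : ℕ} (a e : Matrix (Fin n) (Fin n) ℝ) (h : e * a = a * e) :
    a * e * (a * e) = a * a * (e * e) := by
  calc a * e * (a * e) = a * (e * a) * e := by noncomm_ring
  _ = a * (a * e) * e := by rw [h]
  _ = a * a * (e * e) := by noncomm_ring

lemma herm_transpose {n : ℕ} {M : Matrix (Fin n) (Fin n) ℝ} (h : M.IsHermitian) : Mᵀ = M := by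
  rw [← conjTranspose_eq_transpose_of_trivial, h.eq]

set_option maxHeartbeats 1600000 in
theorem stmt_14 {n : ℕ} (L : Matrix (Fin n) (Fin n) ℝ)
    (hL : (-L).PosSemidef)
    (η β γs : ℝ) (hη : 0 < η) (hγs : γs = η + β ^ 2 / η)
    (P : Matrix (Fin n) (Fin n) ℝ)
    (hP : P = ((η • (1 : Matrix (Fin n) (Fin n) ℝ) - L) ^ 2
          + β ^ 2 • (1 : Matrix (Fin n) (Fin n) ℝ))
        * ((η • (1 : Matrix (Fin n) (Fin n) ℝ) - L)
          * (γs • (1 : Matrix (Fin n) (Fin n) ℝ) - L))⁻¹) :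
    ‖toE P‖ * ‖toE P⁻¹‖ ≤ 1 / 2 * (1 + Real.sqrt (1 + β ^ 2 / η ^ 2)) := by
  -- scalars
  obtain ⟨b, hb_def⟩ : ∃ b : ℝ, b = β ^ 2 / η := ⟨_, rfl⟩
  have hb0 : 0 ≤ b := by rw [hb_def]; positivity
  have hβb : β ^ 2 = η * b := by rw [hb_def]; field_simp
  have hγb : γs = η + b := by rw [hγs, hb_def]
  obtain ⟨s, hs_def⟩ : ∃ s : ℝ, s = Real.sqrt (η ^ 2 + β ^ 2) := ⟨_, rfl⟩
  have hs2 : s ^ 2 = η ^ 2 + β ^ 2 := by rw [hs_def]; exact Real.sq_sqrt (by positivity)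
  have hs0' : 0 ≤ s := by rw [hs_def]; positivity
  have hsη : η ≤ s := by nlinarith [hs2, hs0']
  have hs0 : 0 < s := lt_of_lt_of_le hη hsη
  obtain ⟨t, ht_def⟩ : ∃ t : ℝ, t = η + s := ⟨_, rfl⟩
  have ht0 : 0 < t := by rw [ht_def]; positivity
  have ht2 : t ^ 2 = 2 * η * t + β ^ 2 := by rw [ht_def]; nlinarith [hs2]
  obtain ⟨m, hm_def⟩ : ∃ m : ℝ, m = 2 * η / t := ⟨_, rfl⟩
  have hm0 : 0 < m := by rw [hm_def]; positivity
  have hm1 : m ≤ 1 := by rw [hm_def, div_le_one ht0, ht_def]; linarith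
  have hmt : m * t = 2 * η := by rw [hm_def]; field_simp
  have hc1 : m * b = (1 - m) * (2 * t) := by
    have h1 : (m * b) * (η * t) = ((1 - m) * (2 * t)) * (η * t) := by
      nlinarith [hmt, ht2, hβb]
    have h2 : η * t ≠ 0 := by positivity
    exact mul_right_cancel₀ h2 h1
  have hc2 : η * b = (1 - m) * t ^ 2 := by
    have h1 : (η * b) * t = ((1 - m) * t ^ 2) * t := by nlinarith [hmt, ht2, hβb]
    exact mul_right_cancel₀ ht0.ne' h1
  -- matrices as opaque atoms
  obtain ⟨A, hA_def⟩ : ∃ A, A = η • (1 : Matrix (Fin n) (Fin n) ℝ) - L := ⟨_, rfl⟩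
  obtain ⟨G, hG_def⟩ : ∃ G, G = γs • (1 : Matrix (Fin n) (Fin n) ℝ) - L := ⟨_, rfl⟩
  obtain ⟨N, hN_def⟩ : ∃ N, N = A ^ 2 + β ^ 2 • (1 : Matrix (Fin n) (Fin n) ℝ) := ⟨_, rfl⟩
  obtain ⟨D, hD_def⟩ : ∃ D, D = A * G := ⟨_, rfl⟩
  have hP' : P = N * D⁻¹ := by rw [hP, ← hA_def, ← hG_def, ← hN_def, ← hD_def]
  have hGA : G = A + b • 1 := by rw [hG_def, hA_def, hγb]; module
  have hNA : N = A * A + (η * b) • 1 := by rw [hN_def, hβb, pow_two]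
  have hDA : D = A * A + b • A := by rw [hD_def, hGA]; noncomm_ring
  have hLA : -L = A - η • 1 := by rw [hA_def]; module
  -- hermitian/transpose facts
  have hLt : Lᵀ = L := by
    have h1 := herm_transpose hL.1
    rw [transpose_neg] at h1
    exact neg_injective h1
  have hAt : Aᵀ = A := by rw [hA_def, transpose_sub, transpose_smul, transpose_one, hLt]
  have hGt : Gᵀ = G := by rw [hG_def, transpose_sub, transpose_smul, transpose_one, hLt]
  -- positivity of A, G
  have smul_one_pd : ∀ c : ℝ, 0 < c → ((c • 1 : Matrix (Fin n) (Fin n) ℝ)).PosDef := by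
    intro c hc
    rw [smul_one_eq_diagonal]
    exact .diagonal fun _ => hc
  have smul_one_psd : ∀ c : ℝ, 0 ≤ c → ((c • 1 : Matrix (Fin n) (Fin n) ℝ)).PosSemidef := by
    intro c hc
    rw [smul_one_eq_diagonal]
    exact posSemidef_diagonal_iff.mpr fun _ => hc
  have hA_pd : A.PosDef := by
    have h1 : A = η • 1 + -L := by rw [hA_def]; module
    rw [h1]
    exact (smul_one_pd η hη).add_posSemidef hL
  have hγ0 : 0 < γs := by rw [hγb]; linarith
  have hG_pd : G.PosDef := by
    have h1 : G = γs • 1 + -L := by rw [hG_def]; module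
    rw [h1]
    exact (smul_one_pd γs hγ0).add_posSemidef hL
  have hAA_psd : (A * A).PosSemidef := by
    have h1 := posSemidef_conjTranspose_mul_self A
    rwa [conjTranspose_eq_transpose_of_trivial, hAt] at h1
  have hA_psd : A.PosSemidef := hA_pd.posSemidef
  -- commutation
  have cND : N * D = D * N := by rw [hNA, hDA]; noncomm_ring <;> module
  have cAG : A * G = G * A := by rw [hGA]; noncomm_ring <;> module
  have hDt : Dᵀ = D := by rw [hD_def, transpose_mul, hAt, hGt, ← cAG]
  have hNt : Nᵀ = N := by
    rw [hNA, transpose_add, transpose_smul, transpose_one, transpose_mul, hAt]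
  -- invertibility
  have hD_unit : IsUnit D.det := by
    rw [hD_def, det_mul]
    exact (mul_pos hA_pd.det_pos hG_pd.det_pos).ne'.isUnit
  have hN_pd : N.PosDef := by
    refine .of_dotProduct_mulVec_pos (by rw [Matrix.IsHermitian, conjTranspose_eq_transpose_of_trivial, hNt])
      fun x hx => ?_
    have hAx : A *ᵥ x ≠ 0 := by
      intro hcon
      exact hx ((Matrix.mulVec_injective_iff_isUnit.mpr hA_pd.isUnit)
        (by simpa using hcon))
    have hpos : (0:ℝ) < (A *ᵥ x) ⬝ᵥ (A *ᵥ x) := by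
      obtain ⟨i, hi⟩ := Function.ne_iff.mp hAx
      exact Finset.sum_pos' (fun j _ => mul_self_nonneg _)
        ⟨i, Finset.mem_univ i, by simpa [mul_self_pos] using hi⟩
    have hvm : x ᵥ* A = A *ᵥ x := by
      conv_lhs => rw [← hAt]
      rw [vecMul_transpose]
    have hsq : x ⬝ᵥ (A * A) *ᵥ x = (A *ᵥ x) ⬝ᵥ (A *ᵥ x) := by
      rw [← mulVec_mulVec, dotProduct_mulVec, hvm]
    have hx2 : 0 ≤ x ⬝ᵥ x := by
      exact Finset.sum_nonneg fun j _ => mul_self_nonneg _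
    rw [star_trivial, hNA, add_mulVec, dotProduct_add, hsq, smul_mulVec, one_mulVec,
      dotProduct_smul, smul_eq_mul]
    have : 0 ≤ η * b * (x ⬝ᵥ x) := by positivity
    linarith
  have hN_unit : IsUnit N.det := hN_pd.det_pos.ne'.isUnit
  have eD : D * D⁻¹ = 1 := mul_nonsing_inv _ hD_unit
  have eD' : D⁻¹ * D = 1 := nonsing_inv_mul _ hD_unit
  have eN : N * N⁻¹ = 1 := mul_nonsing_inv _ hN_unit
  have eN' : N⁻¹ * N = 1 := nonsing_inv_mul _ hN_unit
  have cNDi : N * D⁻¹ = D⁻¹ * N := comm_inv cND hD_unit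
  have cDNi : D * N⁻¹ = N⁻¹ * D := comm_inv cND.symm hN_unit
  have hDit : (D⁻¹)ᵀ = D⁻¹ := by rw [transpose_nonsing_inv, hDt]
  have hNit : (N⁻¹)ᵀ = N⁻¹ := by rw [transpose_nonsing_inv, hNt]
  -- P inverse and symmetry
  have hPinv : P⁻¹ = D * N⁻¹ := by
    apply inv_eq_right_inv
    rw [hP']
    calc N * D⁻¹ * (D * N⁻¹) = N * (D⁻¹ * D) * N⁻¹ := by noncomm_ring
    _ = 1 := by rw [eD', mul_one, eN]
  have hPt : Pᵀ = P := by rw [hP', transpose_mul, hDit, hNt, ← cNDi]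
  have hPit : (P⁻¹)ᵀ = P⁻¹ := by rw [hPinv, transpose_mul, hNit, hDt, ← cDNi]
  -- sqrt of -L
  obtain ⟨S, hS_def⟩ : ∃ S, S = (open MatrixOrder in CFC.sqrt (-L)) := ⟨_, rfl⟩
  have hS2 : S * S = -L := by rw [hS_def]; open MatrixOrder in exact CFC.sqrt_mul_sqrt_self (-L) hL.nonneg
  have hSt : Sᵀ = S := by rw [hS_def]; open MatrixOrder in exact herm_transpose (CFC.sqrt_nonneg (-L)).posSemidef.1
  have cSL : S * L = L * S := by
    have h1 : S * (S * S) = (S * S) * S := by noncomm_ring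
    rw [hS2] at h1
    simpa [neg_mul, mul_neg] using h1
  have cSA : S * A = A * S := by
    rw [hA_def]
    simp only [mul_sub, sub_mul, mul_smul_comm, smul_mul_assoc, mul_one, one_mul, cSL]
  have cSAA : S * (A * A) = A * A * S := by
    rw [← mul_assoc S A A, cSA, mul_assoc A S A, cSA, ← mul_assoc]
  have cSN : S * N = N * S := by
    rw [hNA]
    simp only [mul_add, add_mul, mul_smul_comm, smul_mul_assoc, mul_one, one_mul]
    rw [cSAA]
  have cSD : S * D = D * S := by
    rw [hDA]
    simp only [mul_add, add_mul, mul_smul_comm, smul_mul_assoc]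
    rw [cSAA, cSA]
  have cSDi : S * D⁻¹ = D⁻¹ * S := comm_inv cSD hD_unit
  -- B
  obtain ⟨B, hB_def⟩ : ∃ B, B = A - t • (1 : Matrix (Fin n) (Fin n) ℝ) := ⟨_, rfl⟩
  have hBt : Bᵀ = B := by rw [hB_def, transpose_sub, transpose_smul, transpose_one, hAt]
  have cBN : B * N = N * B := by rw [hB_def, hNA]; noncomm_ring <;> module
  have cBD : B * D = D * B := by rw [hB_def, hDA]; noncomm_ring <;> module
  have cBNi : B * N⁻¹ = N⁻¹ * B := comm_inv cBN hN_unit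
  -- key polynomial identities
  have hW : D * D - N * N = b • (S * S * (D + N)) := by
    rw [hS2, hLA, hNA, hDA]
    noncomm_ring
    module
  have hBB : N - m • D = (1 - m) • (B * B) := by
    have e1 : N - m • D = (1 - m) • (A * A) - (m * b) • A + (η * b) • 1 := by
      rw [hNA, hDA]
      module
    have e2 : B * B = A * A - (2 * t) • A + (t ^ 2) • 1 := by
      rw [hB_def]
      noncomm_ring
      match_scalars <;> (first | ring1 | (simp only [nsmul_eq_mul, zsmul_eq_mul]; push_cast; ring1))
    rw [e1, e2, hc1, hc2]
    module
  -- D PSD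
  have hD_psd : D.PosSemidef := by
    rw [hDA]
    exact hAA_psd.add (psd_smul hA_psd hb0)
  have hN_psd : N.PosSemidef := hN_pd.posSemidef
  -- Identity 1
  have I1 : (1:ℝ)^2 • (1 : Matrix (Fin n) (Fin n) ℝ) - Pᵀ * P
      = (S * D⁻¹) * (b • (D + N)) * (D⁻¹ * S) := by
    have hone : (1:ℝ)^2 • (1 : Matrix (Fin n) (Fin n) ℝ) = D * D * (D⁻¹ * D⁻¹) := by
      rw [one_pow, one_smul]
      calc (1 : Matrix (Fin n) (Fin n) ℝ) = D * (D * D⁻¹) * D⁻¹ := by rw [eD, mul_one, eD]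
      _ = D * D * (D⁻¹ * D⁻¹) := by noncomm_ring
    calc (1:ℝ)^2 • (1 : Matrix (Fin n) (Fin n) ℝ) - Pᵀ * P
        = D * D * (D⁻¹ * D⁻¹) - N * N * (D⁻¹ * D⁻¹) := by
          rw [hPt, hP', sq_expand_s14 N D⁻¹ cNDi.symm, hone]
    _ = (D * D - N * N) * (D⁻¹ * D⁻¹) := by rw [sub_mul]
    _ = b • (S * S * (D + N) * (D⁻¹ * D⁻¹)) := by rw [hW, smul_mul_assoc]
    _ = b • (S * D⁻¹ * ((D + N) * (D⁻¹ * S))) := by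
          rw [shuffle S (D + N) D⁻¹ ?_ cSDi ?_]
          · rw [mul_add, add_mul, cSD, cSN]
          · rw [mul_add, add_mul, eD', eD, cNDi]
    _ = (S * D⁻¹) * (b • (D + N)) * (D⁻¹ * S) := by
          simp only [mul_smul_comm, smul_mul_assoc, mul_assoc]
  -- Identity 2
  have I2 : ((1/m):ℝ)^2 • (1 : Matrix (Fin n) (Fin n) ℝ) - (P⁻¹)ᵀ * P⁻¹
      = (B * N⁻¹) * (((1 - m)/m^2) • (N + m • D)) * (N⁻¹ * B) := by
    have hone : ((1/m):ℝ)^2 • (1 : Matrix (Fin n) (Fin n) ℝ)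
        = (1/m)^2 • (N * N * (N⁻¹ * N⁻¹)) := by
      congr 1
      calc (1 : Matrix (Fin n) (Fin n) ℝ) = N * (N * N⁻¹) * N⁻¹ := by rw [eN, mul_one, eN]
      _ = N * N * (N⁻¹ * N⁻¹) := by noncomm_ring
    have hmm : (1/m)^2 * (m * m) = 1 := by field_simp
    have e3 : (N - m • D) * (N + m • D) = N * N - (m * m) • (D * D) := by
      have e4 : (N - m • D) * (N + m • D)
          = N * N + m • (N * D) - m • (D * N) - (m * m) • (D * D) := by
        noncomm_ring
        module
      rw [e4, cND]
      module
    have key2 : (1/m)^2 • (N * N) - D * D = ((1 - m)/m^2) • (B * B * (N + m • D)) := by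
      calc (1/m)^2 • (N * N) - D * D
          = (1/m)^2 • (N * N - (m * m) • (D * D)) := by
            rw [smul_sub, smul_smul, hmm, one_smul]
      _ = (1/m)^2 • ((N - m • D) * (N + m • D)) := by rw [e3]
      _ = (1/m)^2 • ((1 - m) • (B * B) * (N + m • D)) := by rw [hBB]
      _ = ((1 - m)/m^2) • (B * B * (N + m • D)) := by
            rw [smul_mul_assoc, smul_smul]
            congr 1
            ring
    calc ((1/m):ℝ)^2 • (1 : Matrix (Fin n) (Fin n) ℝ) - (P⁻¹)ᵀ * P⁻¹
        = (1/m)^2 • (N * N * (N⁻¹ * N⁻¹)) - D * D * (N⁻¹ * N⁻¹) := by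
          rw [hPit, hPinv, sq_expand_s14 D N⁻¹ cDNi.symm, hone]
    _ = ((1/m)^2 • (N * N) - D * D) * (N⁻¹ * N⁻¹) := by rw [sub_mul, smul_mul_assoc]
    _ = ((1 - m)/m^2) • (B * B * (N + m • D) * (N⁻¹ * N⁻¹)) := by rw [key2, smul_mul_assoc]
    _ = ((1 - m)/m^2) • (B * N⁻¹ * ((N + m • D) * (N⁻¹ * B))) := by
          rw [shuffle B (N + m • D) N⁻¹ ?_ cBNi ?_]
          · rw [mul_add, add_mul, cBN, mul_smul_comm, smul_mul_assoc, cBD]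
          · rw [mul_add, add_mul, eN', eN, mul_smul_comm, smul_mul_assoc, cDNi]
    _ = (B * N⁻¹) * (((1 - m)/m^2) • (N + m • D)) * (N⁻¹ * B) := by
          simp only [mul_smul_comm, smul_mul_assoc, mul_assoc]
  -- PSD conclusions
  have hPSD1 : ((1:ℝ)^2 • (1 : Matrix (Fin n) (Fin n) ℝ) - Pᵀ * P).PosSemidef := by
    rw [I1]
    have hplus : (b • (D + N)).PosSemidef := psd_smul (hD_psd.add hN_psd) hb0
    have h1 := hplus.mul_mul_conjTranspose_same (S * D⁻¹)
    have hct : (S * D⁻¹)ᴴ = D⁻¹ * S := by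
      rw [conjTranspose_mul, conjTranspose_eq_transpose_of_trivial,
        conjTranspose_eq_transpose_of_trivial, hDit, hSt]
    rwa [hct] at h1
  have hPSD2 : (((1/m):ℝ)^2 • (1 : Matrix (Fin n) (Fin n) ℝ) - (P⁻¹)ᵀ * P⁻¹).PosSemidef := by
    rw [I2]
    have hplus : (((1 - m)/m^2) • (N + m • D)).PosSemidef :=
      psd_smul (hN_psd.add (psd_smul hD_psd hm0.le))
        (div_nonneg (by linarith) (by positivity))
    have h1 := hplus.mul_mul_conjTranspose_same (B * N⁻¹)
    have hct : (B * N⁻¹)ᴴ = N⁻¹ * B := by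
      rw [conjTranspose_mul, conjTranspose_eq_transpose_of_trivial,
        conjTranspose_eq_transpose_of_trivial, hNit, hBt]
    rwa [hct] at h1
  -- norms
  have n1 : ‖toE P‖ ≤ 1 := norm_toE_le P 1 zero_le_one hPSD1
  have n2 : ‖toE P⁻¹‖ ≤ 1/m := norm_toE_le P⁻¹ (1/m) (by positivity) hPSD2
  have hmul : ‖toE P‖ * ‖toE P⁻¹‖ ≤ 1 * (1/m) :=
    mul_le_mul n1 n2 (norm_nonneg _) zero_le_one
  rw [one_mul] at hmul
  refine hmul.trans_eq ?_
  have hsqrt : Real.sqrt (1 + β ^ 2 / η ^ 2) = s / η := by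
    rw [show 1 + β ^ 2 / η ^ 2 = (s / η) ^ 2 by rw [div_pow, hs2]; field_simp]
    exact Real.sqrt_sq (by positivity)
  rw [hsqrt, hm_def, ht_def]
  field_simp
  try ring
end

section
/- For η > 0, β ∈ ℝ and γ* = (η²+β²)/η, the function f(x) = ((η+x)² + β²)/((η+x)(γ*+x)), x ≥ 0, satisfies sup_{x≥0} f(x) / inf_{x≥0} f(x) ≤ (1/2)(1 + √(1 + β²/η²)). -/
theorem stmt_15 (η β γs : ℝ) (hη : 0 < η) (hγs : γs = (η ^ 2 + β ^ 2) / η)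
    (f : ℝ → ℝ)
    (hf : ∀ x, f x = ((η + x) ^ 2 + β ^ 2) / ((η + x) * (γs + x))) :
    sSup (f '' Set.Ici 0) / sInf (f '' Set.Ici 0)
      ≤ 1 / 2 * (1 + Real.sqrt (1 + β ^ 2 / η ^ 2)) := by
  set s := Real.sqrt (η ^ 2 + β ^ 2) with hsdef
  have hpos : (0:ℝ) < η ^ 2 + β ^ 2 := by positivity
  have hs2 : s ^ 2 = η ^ 2 + β ^ 2 := Real.sq_sqrt hpos.le
  have hηs : η ≤ s := by
    rw [hsdef]
    nlinarith [Real.sq_sqrt hpos.le, Real.sqrt_nonneg (η ^ 2 + β ^ 2)]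
  have hspos : 0 < s := lt_of_lt_of_le hη hηs
  have hγpos : 0 < γs := by rw [hγs]; positivity
  -- pointwise bounds
  have hub : ∀ y ∈ f '' Set.Ici 0, y ≤ 1 := by
    rintro y ⟨x, hx, rfl⟩
    have hx0 : (0:ℝ) ≤ x := hx
    have hd : 0 < (η + x) * (γs + x) := by positivity
    rw [hf x, div_le_one hd, ← sub_nonneg, hγs]
    have : (η + x) * ((η ^ 2 + β ^ 2) / η + x) - ((η + x) ^ 2 + β ^ 2)
        = (β ^ 2 * x) / η := by field_simp; ring
    rw [this]; positivity
  set L : ℝ := 2 * η / (η + s) with hLdef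
  have hLpos : 0 < L := by positivity
  have hlb : ∀ y ∈ f '' Set.Ici 0, L ≤ y := by
    rintro y ⟨x, hx, rfl⟩
    have hx0 : (0:ℝ) ≤ x := hx
    have hd : 0 < (η + x) * (γs + x) := by positivity
    rw [hf x, hLdef, div_le_div_iff₀ (by positivity) hd]
    have hγ : η * γs = s ^ 2 := by rw [hγs, hs2]; field_simp
    nlinarith [mul_nonneg (sub_nonneg.2 hηs) (sq_nonneg (x - s)), sq_nonneg (x - s)]
  have hne : (f '' Set.Ici 0).Nonempty := ⟨f 0, 0, Set.self_mem_Ici, rfl⟩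
  have hSup : sSup (f '' Set.Ici 0) ≤ 1 := csSup_le hne hub
  have hInf : L ≤ sInf (f '' Set.Ici 0) := le_csInf hne hlb
  have hrhs : 1 / 2 * (1 + Real.sqrt (1 + β ^ 2 / η ^ 2)) = 1 / L := by
    have : 1 + β ^ 2 / η ^ 2 = (s / η) ^ 2 := by
      field_simp
      linarith [hs2]
    rw [this, Real.sqrt_sq (by positivity), hLdef]
    field_simp
  rw [hrhs]
  exact div_le_div₀ zero_le_one hSup hLpos hInf
end
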